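/- The function S(z) := −cot z − (2/3)z + 1/z has exactly one root in the open interval (0,π), and this root is strictly less than 5π/6. -/

import Mathlib

/-!
`S` is strictly convex on `(0, π)`: its second derivative `2 / z ^ 3 - 2 cos z / sin z ^ 3` is
positive because `z ^ 3 cos z < sin z ^ 3` there (trivially where `cos z ≤ 0`, and from the Taylor
bounds `sin z ≥ z - z ^ 3 / 6`, `cos z ≤ 1 - z ^ 2 / 2 + z ^ 4 / 24` where `z < π / 2`).
Moreover `S < 0` on `(0, 1]` and `S (5π/6) > 0`, so the intermediate value theorem gives a root
in `(1, 5π/6)`. By strict convexity, `S` is negative strictly between `1` and any root, which rules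
out a second root and any root at or beyond `5π/6`.
-/

open Real

noncomputable def Sfun (z : ℝ) : ℝ := -Real.cot z - 2 * z / 3 + 1 / z

open Set

lemma cos_le_one_sub_sq_div_two_add_pow_four_div {x : ℝ} (hx₀ : 0 ≤ x) (hx : x ^ 2 ≤ 24) :
    cos x ≤ 1 - x ^ 2 / 2 + x ^ 4 / 24 := by
  have hsin : x / 2 - (x / 2) ^ 3 / 6 ≤ sin (x / 2) := sin_ge_sub_cube (by positivity)
  have hcos : cos x = 1 - 2 * sin (x / 2) ^ 2 := by
    rw [← cos_two_mul_eq_one_sub, mul_div_cancel₀ x two_ne_zero]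
  have hpos : 0 ≤ x / 2 - (x / 2) ^ 3 / 6 := by nlinarith
  nlinarith [pow_le_pow_left₀ hpos hsin 2, pow_nonneg hx₀ 6]

lemma pow_three_mul_cos_lt_sin_pow_three {x : ℝ} (hx₀ : 0 < x) (hx : x < π) :
    x ^ 3 * cos x < sin x ^ 3 := by
  have hsin : 0 < sin x := sin_pos_of_pos_of_lt_pi hx₀ hx
  rcases le_or_gt (cos x) 0 with hcos | hcos
  · nlinarith [pow_pos hx₀ 3, pow_pos hsin 3]
  have hx2 : x < π / 2 := by
    by_contra! h
    exact hcos.not_ge (cos_nonpos_of_pi_div_two_le_of_le h (by linarith))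
  have hx16 : x < 1.6 := by linarith [pi_lt_d2]
  have hcos_le := cos_le_one_sub_sq_div_two_add_pow_four_div hx₀.le (by nlinarith)
  have hsin_ge : x - x ^ 3 / 6 ≤ sin x := sin_ge_sub_cube hx₀.le
  have hpos : 0 < x - x ^ 3 / 6 := by nlinarith
  calc x ^ 3 * cos x ≤ x ^ 3 * (1 - x ^ 2 / 2 + x ^ 4 / 24) := by gcongr
    _ < (x - x ^ 3 / 6) ^ 3 := by nlinarith [pow_pos hx₀ 7]
    _ ≤ sin x ^ 3 := by gcongr

noncomputable def Sfun' (z : ℝ) : ℝ := (sin z ^ 2)⁻¹ - 2 / 3 - (z ^ 2)⁻¹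

lemma hasDerivAt_Sfun {z : ℝ} (hz : sin z ≠ 0) : HasDerivAt Sfun (Sfun' z) z := by
  have hz₀ : z ≠ 0 := by rintro rfl; simp at hz
  have hSfun : Sfun = fun w => -(cos w / sin w) - 2 / 3 * w + w⁻¹ := by
    ext w
    rw [Sfun, cot_eq_cos_div_sin]
    ring
  rw [hSfun]
  refine ((((hasDerivAt_cos z).div (hasDerivAt_sin z) hz).neg.sub
    ((hasDerivAt_id' z).const_mul _)).add (hasDerivAt_inv hz₀)).congr_deriv ?_
  rw [Sfun']
  field_simp
  linear_combination (3 * z ^ 2) * sin_sq_add_cos_sq z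

lemma hasDerivAt_Sfun' {z : ℝ} (hz : sin z ≠ 0) :
    HasDerivAt Sfun' (2 / z ^ 3 - 2 * cos z / sin z ^ 3) z := by
  have hz₀ : z ≠ 0 := by rintro rfl; simp at hz
  refine ((((hasDerivAt_sin z).pow 2).inv (pow_ne_zero 2 hz)).sub_const (2 / 3) |>.sub
    ((hasDerivAt_pow 2 z).inv (pow_ne_zero 2 hz₀))).congr_deriv ?_
  simp only [Pi.pow_apply]
  field_simp
  ring

lemma continuousOn_Sfun : ContinuousOn Sfun (Ioo 0 π) := fun _ hz =>
  (hasDerivAt_Sfun (sin_pos_of_pos_of_lt_pi hz.1 hz.2).ne').continuousAt.continuousWithinAt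

lemma strictMonoOn_Sfun' : StrictMonoOn Sfun' (Ioo 0 π) := by
  refine strictMonoOn_of_deriv_pos (convex_Ioo 0 π) (fun z hz => ?_) (fun z hz => ?_)
  · exact (hasDerivAt_Sfun' (sin_pos_of_pos_of_lt_pi hz.1 hz.2).ne').continuousAt.continuousWithinAt
  rw [interior_Ioo] at hz
  have hsin := sin_pos_of_pos_of_lt_pi hz.1 hz.2
  rw [(hasDerivAt_Sfun' hsin.ne').deriv, sub_pos,
    div_lt_div_iff₀ (pow_pos hsin 3) (pow_pos hz.1 3)]
  nlinarith [pow_three_mul_cos_lt_sin_pow_three hz.1 hz.2]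

lemma strictConvexOn_Sfun : StrictConvexOn ℝ (Ioo 0 π) Sfun := by
  refine StrictMonoOn.strictConvexOn_of_deriv (convex_Ioo 0 π) continuousOn_Sfun ?_
  rw [interior_Ioo]
  intro x hx y hy hxy
  rw [(hasDerivAt_Sfun (sin_pos_of_pos_of_lt_pi hx.1 hx.2).ne').deriv,
    (hasDerivAt_Sfun (sin_pos_of_pos_of_lt_pi hy.1 hy.2).ne').deriv]
  exact strictMonoOn_Sfun' hx hy hxy

lemma Sfun_neg_of_le_one {z : ℝ} (hz₀ : 0 < z) (hz : z ≤ 1) : Sfun z < 0 := by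
  have hsin : 0 < sin z := sin_pos_of_pos_of_lt_pi hz₀ (by linarith [pi_gt_three])
  have hnum : 3 * sin z - 3 * z * cos z - 2 * z ^ 2 * sin z < 0 := by
    have hcos := mul_le_mul_of_nonneg_left (one_sub_sq_div_two_le_cos (x := z))
      (by positivity : (0 : ℝ) ≤ 3 * z)
    have hsin_ge := mul_le_mul_of_nonneg_left (sin_ge_sub_cube hz₀.le)
      (by positivity : (0 : ℝ) ≤ 2 * z ^ 2)
    have hpow : z ^ 5 ≤ z ^ 3 := pow_le_pow_of_le_one hz₀.le hz (by norm_num)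
    nlinarith [sin_le hz₀.le, pow_pos hz₀ 3]
  have hSfun : Sfun z = (3 * sin z - 3 * z * cos z - 2 * z ^ 2 * sin z) / (3 * z * sin z) := by
    rw [Sfun, cot_eq_cos_div_sin]
    field_simp
    ring
  rw [hSfun]
  exact div_neg_of_neg_of_pos hnum (by positivity)

lemma Sfun_five_pi_div_six_pos : 0 < Sfun (5 * π / 6) := by
  have hcot : cot (5 * π / 6) = -√3 := by
    rw [cot_eq_cos_div_sin, show 5 * π / 6 = π - π / 6 by ring, cos_pi_sub, sin_pi_sub,
      cos_pi_div_six, sin_pi_div_six]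
    ring
  have hsqrt : (1.73 : ℝ) < √3 := by
    rw [lt_sqrt (by norm_num)]
    norm_num
  have hinv : (0.38 : ℝ) < 1 / (5 * π / 6) := by
    rw [lt_div_iff₀ (by positivity)]
    linarith [pi_lt_d2]
  rw [Sfun, hcot]
  linarith [pi_lt_d2]

lemma Sfun_neg_of_lt_root {y z : ℝ} (hz : z ∈ Ioo 0 π) (hSz : Sfun z = 0) (hy₀ : 0 < y)
    (hyz : y < z) : Sfun y < 0 := by
  rcases le_or_gt y 1 with hy | hy
  · exact Sfun_neg_of_le_one hy₀ hy
  have h1 : (1 : ℝ) ∈ Ioo 0 π := ⟨one_pos, by linarith [pi_gt_three]⟩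
  have := strictConvexOn_Sfun.lt_on_openSegment h1 hz (hy.trans hyz).ne
    (by rw [openSegment_eq_Ioo (hy.trans hyz)]; exact ⟨hy, hyz⟩)
  rwa [hSz, max_eq_right (Sfun_neg_of_le_one one_pos le_rfl).le] at this

theorem Sfun_unique_root :
    (∃! z : ℝ, z ∈ Set.Ioo 0 π ∧ Sfun z = 0) ∧
      ∀ z ∈ Set.Ioo (0:ℝ) π, Sfun z = 0 → z < 5 * π / 6 := by
  have hπ : 1 < 5 * π / 6 ∧ 5 * π / 6 < π := by constructor <;> linarith [pi_gt_three]
  obtain ⟨z₀, hz₀, hSz₀⟩ : ∃ z ∈ Ioo 1 (5 * π / 6), Sfun z = 0 :=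
    intermediate_value_Ioo hπ.1.le
      (continuousOn_Sfun.mono fun x hx => ⟨by linarith [hx.1], by linarith [hx.2]⟩)
      ⟨Sfun_neg_of_le_one one_pos le_rfl, Sfun_five_pi_div_six_pos⟩
  have hz₀' : z₀ ∈ Ioo 0 π := ⟨by linarith [hz₀.1], hz₀.2.trans hπ.2⟩
  refine ⟨⟨z₀, ⟨hz₀', hSz₀⟩, fun y ⟨hy, hSy⟩ => ?_⟩, fun z hz hSz => ?_⟩
  · rcases lt_trichotomy y z₀ with h | h | h
    · exact absurd hSy (Sfun_neg_of_lt_root hz₀' hSz₀ hy.1 h).ne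
    · exact h
    · exact absurd hSz₀ (Sfun_neg_of_lt_root hy hSy hz₀'.1 h).ne
  · by_contra! h
    rcases h.eq_or_lt with h | h
    · exact Sfun_five_pi_div_six_pos.ne' (h ▸ hSz)
    · exact (Sfun_neg_of_lt_root hz hSz (by linarith) h).not_gt Sfun_five_pi_div_six_pos
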